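/- Let P be the Petersen graph and let 𝓜 be a multiset of k perfect matchings of P. Let P^𝓜 be the multigraph obtained from P by adding, for each matching in 𝓜, a parallel copy of each of its edges. If 𝓜' is a multiset of k+1 pairwise edge-disjoint perfect matchings of P^𝓜, then (as a multiset of perfect matchings of P, via projection) 𝓜 is a sub-multiset of 𝓜'. -/

import Mathlib

/-- The vertex type of the Petersen graph, realized as the Kneser graph K(5,2). -/
abbrev PetersenV : Type := {s : Finset (Fin 5) // s.card = 2}

/-- The Petersen graph as the Kneser graph K(5,2). -/
def petersen : SimpleGraph PetersenV where
  Adj a b := Disjoint a.1 b.1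
  symm := ⟨fun _ _ h => h.symm⟩
  loopless := ⟨by
    intro a h
    have h0 : a.1 = ⊥ := disjoint_self.mp h
    have h2 := a.2
    rw [h0] at h2
    simp at h2⟩

instance : DecidableRel petersen.Adj :=
  fun a b => inferInstanceAs (Decidable (Disjoint a.1 b.1))

/-- Perfect matching of the (simple) Petersen graph, as a finite edge set. -/
def IsPM (m : Finset (Sym2 PetersenV)) : Prop :=
  (↑m ⊆ petersen.edgeSet) ∧ ∀ v : PetersenV, ∃! e, e ∈ m ∧ v ∈ e

/-- `m` is a perfect matching of the multigraph whose edge multiset is `E`: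
a sub-multiset of `E` in which every vertex lies in exactly one edge
(counted with multiplicity). -/
def IsPMOf (E m : Multiset (Sym2 PetersenV)) : Prop :=
  m ≤ E ∧ ∀ v : PetersenV, (m.filter (fun e => v ∈ e)).card = 1

/-!
Every perfect matching of the Petersen graph is one of six explicit ones (an exhaustive
search), and any two of these share an edge that lies in no other. Let `a i`, `b i` be the
multiplicities of the `i`-th matching in `𝓜` and in `𝓜'`. The multigraph has `1 + a i + a j`
copies of the edge private to matchings `i` and `j`, and the members of `𝓜'` use distinct copies,
so `b i + b j ≤ 1 + a i + a j`; moreover `∑ b = ∑ a + 1`. If `a i > b i`, the other five values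
`b - a` would sum to at least `2` although any two of them sum to at most `1`, which is
impossible. Hence `a ≤ b` everywhere, i.e. `𝓜 ≤ 𝓜'`.
-/

namespace Multiset

variable {α : Type*} [DecidableEq α]

theorem card_filter_mem_le_count_sum (S : Multiset (Multiset α)) (a : α) :
    (S.filter (a ∈ ·)).card ≤ S.sum.count a := by
  induction S using Multiset.induction_on with
  | empty => simp
  | cons N S ih =>
    rw [filter_cons, sum_cons, count_add, card_add]
    split_ifs with h
    · rw [card_singleton]
      exact Nat.add_le_add (one_le_count_iff_mem.mpr h) ih
    · rw [card_zero, zero_add]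
      exact ih.trans (Nat.le_add_left _ _)

theorem count_sum_map_val (S : Multiset (Finset α)) (a : α) :
    (S.map Finset.val).sum.count a = (S.filter (a ∈ ·)).card := by
  induction S using Multiset.induction_on with
  | empty => simp
  | cons X S ih =>
    rw [map_cons, sum_cons, count_add, filter_cons, card_add, ih, count_eq_of_nodup X.nodup]
    split_ifs <;> simp_all

theorem card_filter_eq_count_add_count {p : α → Prop} [DecidablePred p] {S : Multiset α} {A B : α}
    (hAB : A ≠ B) (hp : ∀ X ∈ S, p X ↔ X = A ∨ X = B) :
    (S.filter p).card = S.count A + S.count B := by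
  induction S using Multiset.induction_on with
  | empty => simp
  | cons X S ih =>
    have hX := hp X (mem_cons_self X S)
    rw [filter_cons, card_add, count_cons, count_cons, ih fun Y hY => hp Y (mem_cons_of_mem hY)]
    split_ifs <;> simp only [card_singleton, card_zero] <;> grind

end Multiset

namespace Finset

variable {ι : Type*} [DecidableEq ι]

theorem sum_le_one_of_add_le_one {t : Finset ι} {d : ι → ℤ} (ht : 2 ≤ t.card)
    (h : ∀ i ∈ t, ∀ j ∈ t, i ≠ j → d i + d j ≤ 1) : ∑ i ∈ t, d i ≤ 1 := by
  by_cases hpos : ∃ j ∈ t, 0 < d j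
  · obtain ⟨j, hj, hdj⟩ := hpos
    obtain ⟨l, hl⟩ : (t.erase j).Nonempty := by
      rw [← card_pos, card_erase_of_mem hj]; omega
    have hrest : ∑ i ∈ (t.erase j).erase l, d i ≤ 0 := by
      refine sum_nonpos fun i hi => ?_
      have hij : i ≠ j := ne_of_mem_erase (mem_of_mem_erase hi)
      have := h j hj i (mem_of_mem_erase (mem_of_mem_erase hi)) hij.symm
      omega
    have hjl := h j hj l (mem_of_mem_erase hl) (ne_of_mem_erase hl).symm
    rw [← add_sum_erase t d hj, ← add_sum_erase _ d hl]
    omega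
  · push Not at hpos
    exact (sum_nonpos hpos).trans zero_le_one

theorem le_of_sum_eq_add_one_of_add_le {s : Finset ι} {a b : ι → ℕ} (hs : 3 ≤ s.card)
    (hsum : ∑ i ∈ s, b i = ∑ i ∈ s, a i + 1)
    (h : ∀ i ∈ s, ∀ j ∈ s, i ≠ j → b i + b j ≤ 1 + a i + a j) : ∀ i ∈ s, a i ≤ b i := by
  intro i hi
  by_contra hlt
  have hrest : ∑ j ∈ s.erase i, ((b j : ℤ) - a j) ≤ 1 :=
    sum_le_one_of_add_le_one (by rw [card_erase_of_mem hi]; omega) fun j hj l hl hjl => by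
      have := h j (mem_of_mem_erase hj) l (mem_of_mem_erase hl) hjl
      omega
  have htotal : ∑ j ∈ s, ((b j : ℤ) - a j) = 1 := by
    rw [sum_sub_distrib, ← Nat.cast_sum, ← Nat.cast_sum, hsum]
    push_cast
    ring
  rw [← add_sum_erase s _ hi] at htotal
  omega

end Finset

theorem Finset.eq_of_subset_of_covers {V : Type*} {m l : Finset (Sym2 V)}
    (hm : ∀ v, ∃! e, e ∈ m ∧ v ∈ e) (hlm : l ⊆ m) (hl : ∀ v, ∃ x ∈ l, v ∈ x) : l = m := by
  refine hlm.antisymm fun e he => ?_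
  induction e using Sym2.ind with
  | _ v w =>
    obtain ⟨x, hx, hvx⟩ := hl v
    rwa [(hm v).unique ⟨he, Sym2.mem_mk_left v w⟩ ⟨hlm hx, hvx⟩]

namespace SimpleGraph

variable {V : Type*} [DecidableEq V] (G : SimpleGraph V) (P : Finset (Sym2 V) → Prop)

/-- A search tree for perfect matchings: at each vertex of `vs` in turn, branch over the edges at
it that are equal to or disjoint from every edge already chosen. At a vertex that is already
covered only its existing edge survives, which keeps the tree small; by `MatchingSearch.sound`,
if `P` holds at all leaves of the search over all vertices, it holds for every perfect matching. -/
def MatchingSearch : List V → Finset (Sym2 V) → Prop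
  | [], l => P l
  | v :: vs, l => ∀ w, G.Adj v w → (∀ y ∈ l, ∀ u, u ∈ y → u ∈ s(v, w) → y = s(v, w)) →
      MatchingSearch vs (insert s(v, w) l)

instance decidableMatchingSearch [Fintype V] [DecidableRel G.Adj] [DecidablePred P] :
    ∀ vs l, Decidable (G.MatchingSearch P vs l)
  | [], l => inferInstanceAs (Decidable (P l))
  | v :: vs, _ =>
    have := fun l => decidableMatchingSearch vs l
    inferInstanceAs (Decidable (∀ w, G.Adj v w → _ → _))

variable {G P}

theorem MatchingSearch.sound {m : Finset (Sym2 V)} (hmG : (m : Set (Sym2 V)) ⊆ G.edgeSet)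
    (hm : ∀ v, ∃! e, e ∈ m ∧ v ∈ e) :
    ∀ {vs l}, G.MatchingSearch P vs l → l ⊆ m → (∀ u, u ∈ vs ∨ ∃ x ∈ l, u ∈ x) → P m
  | [], l, h, hlm, hl => by
    rwa [← Finset.eq_of_subset_of_covers hm hlm fun u => (hl u).resolve_left List.not_mem_nil]
  | v :: vs, l, h, hlm, hl => by
    obtain ⟨e, ⟨he, hve⟩, -⟩ := hm v
    set w := Sym2.Mem.other hve
    have hvw : s(v, w) ∈ m := (Sym2.other_spec hve).symm ▸ he
    refine MatchingSearch.sound hmG hm (h w (hmG hvw) fun y hy u huy huvw =>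
      (hm u).unique ⟨hlm hy, huy⟩ ⟨hvw, huvw⟩) (Finset.insert_subset hvw hlm) fun u => ?_
    rcases hl u with hu | ⟨x, hx, hux⟩
    · rcases List.mem_cons.mp hu with rfl | hu
      · exact .inr ⟨_, Finset.mem_insert_self _ _, Sym2.mem_mk_left _ _⟩
      · exact .inl hu
    · exact .inr ⟨x, Finset.mem_insert_of_mem hx, hux⟩

end SimpleGraph

namespace Petersen

def pair (a b : Fin 5) (h : ({a, b} : Finset (Fin 5)).card = 2 := by decide) : PetersenV :=
  ⟨{a, b}, h⟩

def vertices : List PetersenV :=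
  [pair 0 1, pair 0 2, pair 0 3, pair 0 4, pair 1 2,
    pair 1 3, pair 1 4, pair 2 3, pair 2 4, pair 3 4]

theorem mem_vertices : ∀ v, v ∈ vertices := by decide

def perfectMatching : Fin 6 → Finset (Sym2 PetersenV) :=
  ![{s(pair 0 1, pair 2 3), s(pair 0 2, pair 1 4), s(pair 0 3, pair 2 4), s(pair 0 4, pair 1 3),
      s(pair 1 2, pair 3 4)},
    {s(pair 0 1, pair 2 3), s(pair 0 2, pair 3 4), s(pair 0 3, pair 1 4), s(pair 0 4, pair 1 2),
      s(pair 1 3, pair 2 4)},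
    {s(pair 0 1, pair 2 4), s(pair 0 2, pair 1 3), s(pair 0 3, pair 1 4), s(pair 0 4, pair 2 3),
      s(pair 1 2, pair 3 4)},
    {s(pair 0 1, pair 2 4), s(pair 0 2, pair 3 4), s(pair 0 3, pair 1 2), s(pair 0 4, pair 1 3),
      s(pair 1 4, pair 2 3)},
    {s(pair 0 1, pair 3 4), s(pair 0 2, pair 1 3), s(pair 0 3, pair 2 4), s(pair 0 4, pair 1 2),
      s(pair 1 4, pair 2 3)},
    {s(pair 0 1, pair 3 4), s(pair 0 2, pair 1 4), s(pair 0 3, pair 1 2), s(pair 0 4, pair 2 3),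
      s(pair 1 3, pair 2 4)}]

theorem perfectMatching_injective : Function.Injective perfectMatching := by decide

theorem matchingSearch :
    petersen.MatchingSearch (fun m => ∃ i, perfectMatching i = m) vertices ∅ := by
  decide +kernel

theorem exists_perfectMatching_eq {m : Finset (Sym2 PetersenV)} (hm : IsPM m) :
    ∃ i, perfectMatching i = m :=
  matchingSearch.sound hm.1 hm.2 (Finset.empty_subset m) fun v => .inl (mem_vertices v)

theorem exists_edge_mem_iff : ∀ i j, i ≠ j → ∃ e, ∀ k, e ∈ perfectMatching k ↔ k = i ∨ k = j := by
  decide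

theorem isPM_toFinset {E N : Multiset (Sym2 PetersenV)}
    (hE : ∀ e ∈ E, e ∈ petersen.edgeSet) (hN : IsPMOf E N) : IsPM N.toFinset := by
  refine ⟨fun e he => hE e (Multiset.mem_of_le hN.1 (Multiset.mem_toFinset.mp he)), fun v => ?_⟩
  obtain ⟨a, ha⟩ := Multiset.card_eq_one.mp (hN.2 v)
  have hmem : ∀ e, e ∈ N ∧ v ∈ e ↔ e = a := fun e => by
    rw [← Multiset.mem_singleton, ← ha, Multiset.mem_filter]
  exact ⟨a, by simpa using (hmem a).mpr rfl, fun e he => (hmem e).mp (by simpa using he)⟩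

theorem sum_count_perfectMatching {S : Multiset (Finset (Sym2 PetersenV))}
    (hS : ∀ X ∈ S, IsPM X) : ∑ i, S.count (perfectMatching i) = S.card := by
  rw [← Finset.sum_image (f := S.count) fun i _ j _ h => perfectMatching_injective h]
  refine Multiset.sum_count_eq_card fun X hX => ?_
  obtain ⟨i, rfl⟩ := exists_perfectMatching_eq (hS X hX)
  exact Finset.mem_image_of_mem _ (Finset.mem_univ i)

theorem exists_edge_card_filter_mem {i j : Fin 6} (hij : i ≠ j) :
    ∃ e, ∀ S : Multiset (Finset (Sym2 PetersenV)), (∀ X ∈ S, IsPM X) →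
      (S.filter (e ∈ ·)).card = S.count (perfectMatching i) + S.count (perfectMatching j) := by
  obtain ⟨e, he⟩ := exists_edge_mem_iff i j hij
  refine ⟨e, fun S hS => Multiset.card_filter_eq_count_add_count
    (perfectMatching_injective.ne hij) fun X hX => ?_⟩
  obtain ⟨k, rfl⟩ := exists_perfectMatching_eq (hS X hX)
  simp only [he, perfectMatching_injective.eq_iff]

theorem mem_edgeSet_of_mem_add_sum {𝓜 : Multiset (Finset (Sym2 PetersenV))}
    (h𝓜 : ∀ M ∈ 𝓜, IsPM M) {e : Sym2 PetersenV}
    (he : e ∈ petersen.edgeFinset.val + (𝓜.map Finset.val).sum) : e ∈ petersen.edgeSet := by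
  rcases Multiset.mem_add.mp he with he | he
  · exact SimpleGraph.mem_edgeFinset.mp he
  · obtain ⟨_, hs, heM⟩ := Multiset.mem_join.mp he
    obtain ⟨M, hM, rfl⟩ := Multiset.mem_map.mp hs
    exact (h𝓜 M hM).1 heM

theorem count_add_count_le {𝓜 : Multiset (Finset (Sym2 PetersenV))} (h𝓜 : ∀ M ∈ 𝓜, IsPM M)
    {𝓜' : Multiset (Multiset (Sym2 PetersenV))} (h𝓜' : ∀ X ∈ 𝓜'.map Multiset.toFinset, IsPM X)
    (hdisj : 𝓜'.sum ≤ petersen.edgeFinset.val + (𝓜.map Finset.val).sum)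
    {i j : Fin 6} (hij : i ≠ j) :
    (𝓜'.map Multiset.toFinset).count (perfectMatching i) +
        (𝓜'.map Multiset.toFinset).count (perfectMatching j) ≤
      1 + 𝓜.count (perfectMatching i) + 𝓜.count (perfectMatching j) := by
  obtain ⟨e, he⟩ := exists_edge_card_filter_mem hij
  calc _ = ((𝓜'.map Multiset.toFinset).filter (e ∈ ·)).card := (he _ h𝓜').symm
    _ = (𝓜'.filter (e ∈ ·)).card := by simp [Multiset.filter_map]
    _ ≤ 𝓜'.sum.count e := Multiset.card_filter_mem_le_count_sum _ _
    _ ≤ (petersen.edgeFinset.val + (𝓜.map Finset.val).sum).count e :=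
        Multiset.count_le_of_le _ hdisj
    _ ≤ 1 + (𝓜.filter (e ∈ ·)).card := by
        rw [Multiset.count_add, Multiset.count_sum_map_val]
        gcongr
        exact Multiset.nodup_iff_count_le_one.mp petersen.edgeFinset.nodup e
    _ = _ := by rw [he 𝓜 h𝓜, add_assoc]

end Petersen

/-- Let `𝓜` be a multiset of `k` perfect matchings of the Petersen graph and
`P^𝓜` the multigraph obtained by adding, for each matching in `𝓜`, a parallel
copy of each of its edges. If `𝓜'` is a multiset of `k+1` pairwise
edge-disjoint perfect matchings of `P^𝓜`, then (projecting each member of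
`𝓜'` to a perfect matching of `P`) `𝓜` is a sub-multiset of `𝓜'`. -/
theorem petersen_plus_matchings_sub_multiset
    (k : ℕ) (𝓜 : Multiset (Finset (Sym2 PetersenV)))
    (h𝓜 : ∀ M ∈ 𝓜, IsPM M) (hk : 𝓜.card = k)
    (E : Multiset (Sym2 PetersenV))
    (hE : E = petersen.edgeFinset.val + (𝓜.map Finset.val).sum)
    (𝓜' : Multiset (Multiset (Sym2 PetersenV)))
    (h𝓜' : ∀ N ∈ 𝓜', IsPMOf E N) (hk' : 𝓜'.card = k + 1)
    (hdisj : 𝓜'.sum ≤ E) :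
    𝓜 ≤ 𝓜'.map Multiset.toFinset := by
  subst hE hk
  set 𝓝 := 𝓜'.map Multiset.toFinset
  have h𝓝 : ∀ X ∈ 𝓝, IsPM X := Multiset.forall_mem_map_iff.mpr fun N hN =>
    Petersen.isPM_toFinset (fun _ => Petersen.mem_edgeSet_of_mem_add_sum h𝓜) (h𝓜' N hN)
  have hle (i : Fin 6) :
      𝓜.count (Petersen.perfectMatching i) ≤ 𝓝.count (Petersen.perfectMatching i) := by
    refine Finset.le_of_sum_eq_add_one_of_add_le (s := .univ) (by simp) ?_
      (fun i _ j _ hij => Petersen.count_add_count_le h𝓜 h𝓝 hdisj hij) i (Finset.mem_univ i)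
    rw [Petersen.sum_count_perfectMatching h𝓜, Petersen.sum_count_perfectMatching h𝓝,
      Multiset.card_map, hk']
  refine Multiset.le_iff_count.mpr fun X => ?_
  by_cases hX : X ∈ 𝓜
  · obtain ⟨i, rfl⟩ := Petersen.exists_perfectMatching_eq (h𝓜 X hX)
    exact hle i
  · simp [Multiset.count_eq_zero.mpr hX]
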